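/- arXiv:2210.03410 — 2 statements merged into one kernel-verified Lean document; each statement's English description precedes it below -/
import Mathlib

section
/- For every integer h > 3, there exists an approving configuration with parameters (n, d, h) where n = 4h - 3 and d = 2h - 1. -/
open Finset
open scoped Classical

/-- The closed neighborhood `N[v] = {v} ∪ N(v)` of a vertex `v` in a simple graph `G`.
A `d`-regular graph with loops is modeled by a simple graph in which every
closed neighborhood has size `d`. -/
noncomputable def closedNbhd {n : ℕ} (G : SimpleGraph (Fin n)) (v : Fin n) : Finset (Fin n) :=
  Finset.univ.filter fun u => u = v ∨ G.Adj v u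

/-- A configuration with parameters `(n, d, h)`: a simple graph `G` on `n` vertices all
of whose closed neighborhoods have size `d` (i.e. a `d`-regular graph with loops),
together with an opinion function `f : V → {1, -1}` having exactly `h` happy vertices. -/
def IsConfig {n : ℕ} (d h : ℕ) (G : SimpleGraph (Fin n)) (f : Fin n → ℤ) : Prop :=
  (∀ v, (closedNbhd G v).card = d) ∧ (∀ v, f v = 1 ∨ f v = -1) ∧
  (Finset.univ.filter fun v => f v = 1).card = h

/-- The number of proponents: vertices `v` with `∑_{u ∈ N[v]} f u ≥ 1`. -/
noncomputable def numProponents {n : ℕ} (G : SimpleGraph (Fin n)) (f : Fin n → ℤ) : ℕ :=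
  (Finset.univ.filter fun v => 1 ≤ ∑ u ∈ closedNbhd G v, f u).card

/-- A configuration is approving if more than `n/2` of its vertices are proponents. -/
def IsApproving {n : ℕ} (G : SimpleGraph (Fin n)) (f : Fin n → ℤ) : Prop :=
  2 * numProponents G f > n

/-- `hmin n d`: the least `h` for which an approving configuration with parameters
`(n, d, h)` exists. -/
noncomputable def hmin (n d : ℕ) : ℕ :=
  sInf {h : ℕ | ∃ (G : SimpleGraph (Fin n)) (f : Fin n → ℤ), IsConfig d h G f ∧ IsApproving G f}

/-- `hmax n d`: the greatest `h ≤ n` for which a disapproving configuration with parameters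
`(n, d, h)` exists. -/
noncomputable def hmax (n d : ℕ) : ℕ :=
  sSup {h : ℕ | h ≤ n ∧
    ∃ (G : SimpleGraph (Fin n)) (f : Fin n → ℤ), IsConfig d h G f ∧ ¬ IsApproving G f}

/-- `hminN n`: the minimum of `hmin n d` over odd `d` with `1 ≤ d ≤ n`. -/
noncomputable def hminN (n : ℕ) : ℕ :=
  sInf {m : ℕ | ∃ d : ℕ, Odd d ∧ 1 ≤ d ∧ d ≤ n ∧ m = hmin n d}

/-!
Take a clique `P` on the `h` happy vertices and `h - 1` sad ones, delete a cycle through its sad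
vertices, and join each sad vertex of `P` to two vertices of a clique `Q` on the remaining
`2h - 2` sad vertices. Then every closed neighbourhood has `2h - 1` vertices, and a vertex of `P`
still sees all `h` happy vertices, so it votes `h - (h - 1) = 1`. Hence the `2h - 1 > n / 2`
vertices of `P` are proponents.
-/

theorem Finset.sum_eq_two_mul_card_filter_sub_card {α : Type*} {s : Finset α} {f : α → ℤ}
    (hf : ∀ u ∈ s, f u = 1 ∨ f u = -1) :
    ∑ u ∈ s, f u = 2 * #(s.filter (f · = 1)) - #s := by
  have hsad : ∀ u ∈ s.filter (¬ f · = 1), f u = -1 := by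
    intro u hu
    rw [mem_filter] at hu
    exact (hf u hu.1).resolve_left hu.2
  rw [← sum_filter_add_sum_filter_not s (f · = 1),
    sum_congr rfl (fun u hu => (mem_filter.1 hu).2), sum_congr rfl hsad, ← card_filter_add_card_filter_not (s := s) (f · = 1)]
  simp only [sum_const, nsmul_eq_mul, mul_one, mul_neg, Nat.cast_add]
  ring

theorem sum_closedNbhd_of_happy_subset {n d h : ℕ} {G : SimpleGraph (Fin n)} {f : Fin n → ℤ}
    (hc : IsConfig d h G f) {v : Fin n} (hv : univ.filter (f · = 1) ⊆ closedNbhd G v) :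
    ∑ u ∈ closedNbhd G v, f u = 2 * h - d := by
  obtain ⟨hcard, hpm, hhappy⟩ := hc
  have hhappy_nbhd : (closedNbhd G v).filter (f · = 1) = univ.filter (f · = 1) :=
    Subset.antisymm (filter_subset_filter _ (subset_univ _)) fun u hu =>
      mem_filter.2 ⟨hv hu, (mem_filter.1 hu).2⟩
  rw [sum_eq_two_mul_card_filter_sub_card fun u _ => hpm u, hcard v, hhappy_nbhd, hhappy]

theorem map_closedNbhd_fromRel {n : ℕ} {r : ℕ → ℕ → Prop} (hrefl : ∀ x, r x x)
    (hsymm : ∀ x y, r x y → r y x) (v : Fin n) :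
    (closedNbhd (.fromRel fun u w : Fin n => r u w) v).map Fin.valEmbedding
      = (range n).filter (r v) := by
  ext y
  simp only [closedNbhd, mem_map, mem_filter, mem_univ, true_and, SimpleGraph.fromRel_adj,
    Fin.valEmbedding_apply, mem_range]
  constructor
  · rintro ⟨u, hu, rfl⟩
    refine ⟨u.isLt, ?_⟩
    rcases hu with rfl | ⟨-, h | h⟩
    exacts [hrefl _, h, hsymm _ _ h]
  · rintro ⟨hy, hr⟩
    refine ⟨⟨y, hy⟩, ?_, rfl⟩
    by_cases he : (⟨y, hy⟩ : Fin n) = v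
    · exact .inl he
    · exact .inr ⟨Ne.symm he, .inl hr⟩

namespace ApprovingConstruction

def cycleAdj (m i j : ℕ) : Prop :=
  j = i + 1 ∨ i = j + 1 ∨ (i = 0 ∧ j = m - 1) ∨ (j = 0 ∧ i = m - 1)

/-- Vertices `0, …, h-1` are happy; together with the sad vertices `h, …, 2h-2` they span a
clique `P` from which a cycle through `h, …, 2h-2` is removed. The sad vertices
`2h-1, …, 4h-4` span a clique `Q`, and `h + i` is joined to `2h-1 + 2i` and `2h + 2i`. -/
def adj (h x y : ℕ) : Prop :=
  (x < 2*h-1 ∧ y < 2*h-1 ∧ ¬(h ≤ x ∧ h ≤ y ∧ cycleAdj (h-1) (x-h) (y-h)))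
  ∨ (2*h-1 ≤ x ∧ 2*h-1 ≤ y)
  ∨ (h ≤ x ∧ x < 2*h-1 ∧ (y = 2*h-1 + 2*(x-h) ∨ y = 2*h + 2*(x-h)))
  ∨ (h ≤ y ∧ y < 2*h-1 ∧ (x = 2*h-1 + 2*(y-h) ∨ x = 2*h + 2*(y-h)))

theorem adj_refl {h : ℕ} (hh : h ≠ 2) (x : ℕ) : adj h x x := by
  unfold adj cycleAdj; omega

theorem adj_symm {h : ℕ} (x y : ℕ) : adj h x y → adj h y x := by
  unfold adj cycleAdj; tauto

def graph (h : ℕ) : SimpleGraph (Fin (4*h-3)) :=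
  .fromRel fun u v => adj h u v

def opinion (h : ℕ) (u : Fin (4*h-3)) : ℤ :=
  if u.val < h then 1 else -1

variable {h : ℕ}

theorem map_closedNbhd_graph (hh : h ≠ 2) (v : Fin (4*h-3)) :
    (closedNbhd (graph h) v).map Fin.valEmbedding = (range (4*h-3)).filter (adj h v) :=
  map_closedNbhd_fromRel (adj_refl hh) adj_symm v

theorem filter_adj_of_lt {x : ℕ} (hx : x < h) :
    (range (4*h-3)).filter (adj h x) = range (2*h-1) := by
  ext y
  simp only [mem_filter, mem_range, adj, cycleAdj]
  omega

theorem card_filter_adj_of_le_of_lt (hh : 4 ≤ h) {x : ℕ} (hx : h ≤ x) (hx' : x < 2*h-1) :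
    #((range (4*h-3)).filter (adj h x)) = 2*h-1 := by
  obtain ⟨cycleSucc, hcycleSucc⟩ : ∃ s, s = if x = 2*h-2 then h else x+1 := ⟨_, rfl⟩
  obtain ⟨cyclePred, hcyclePred⟩ : ∃ p, p = if x = h then 2*h-2 else x-1 := ⟨_, rfl⟩
  have hnbhd : (range (4*h-3)).filter (adj h x) = insert (2*h-1 + 2*(x-h))
      (insert (2*h + 2*(x-h)) (((range (2*h-1)).erase cycleSucc).erase cyclePred)) := by
    ext y
    simp only [mem_filter, mem_range, mem_insert, mem_erase, adj, cycleAdj]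
    split_ifs at hcycleSucc hcyclePred <;> omega
  rw [hnbhd, card_insert_of_notMem, card_insert_of_notMem, card_erase_of_mem, card_erase_of_mem,
    card_range]
  · omega
  all_goals simp only [mem_insert, mem_erase, mem_range]
  all_goals split_ifs at hcycleSucc hcyclePred <;> omega

theorem card_filter_adj_of_le {x : ℕ} (hx : 2*h-1 ≤ x) (hx' : x < 4*h-3) :
    #((range (4*h-3)).filter (adj h x)) = 2*h-1 := by
  have hnbhd : (range (4*h-3)).filter (adj h x)
      = insert (h + (x - (2*h-1)) / 2) (Ico (2*h-1) (4*h-3)) := by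
    ext y
    simp only [mem_filter, mem_range, mem_insert, mem_Ico, adj, cycleAdj]
    omega
  rw [hnbhd, card_insert_of_notMem (by simp only [mem_Ico]; omega), Nat.card_Ico]
  omega

theorem card_closedNbhd_graph (hh : 4 ≤ h) (v : Fin (4*h-3)) :
    #(closedNbhd (graph h) v) = 2*h-1 := by
  rw [← card_map Fin.valEmbedding, map_closedNbhd_graph (by omega)]
  rcases lt_or_ge v.val h with hv | hv
  · rw [filter_adj_of_lt hv, card_range]
  rcases lt_or_ge v.val (2*h-1) with hv' | hv'
  · exact card_filter_adj_of_le_of_lt hh hv hv'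
  · exact card_filter_adj_of_le hv' v.isLt

theorem filter_opinion_eq_one : univ.filter (opinion h · = 1) = univ.filter (·.val < h) := by
  ext u
  by_cases hu : u.val < h <;> simp [opinion, hu]

theorem isConfig_graph_opinion (hh : 4 ≤ h) : IsConfig (2*h-1) h (graph h) (opinion h) := by
  refine ⟨card_closedNbhd_graph hh, fun u => ?_, ?_⟩
  · unfold opinion; split_ifs <;> simp
  · rw [filter_opinion_eq_one, Fin.card_filter_val_lt]
    omega

theorem happy_subset_closedNbhd_graph (hh : 4 ≤ h) {v : Fin (4*h-3)} (hv : v.val < 2*h-1) :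
    univ.filter (opinion h · = 1) ⊆ closedNbhd (graph h) v := by
  intro u hu
  rw [filter_opinion_eq_one, mem_filter] at hu
  rw [← mem_map' Fin.valEmbedding, map_closedNbhd_graph (by omega), mem_filter, mem_range]
  simp only [Fin.valEmbedding_apply, adj, cycleAdj]
  omega

theorem isApproving_graph_opinion (hh : 4 ≤ h) : IsApproving (graph h) (opinion h) := by
  have hcore : univ.filter (·.val < 2*h-1) ⊆
      univ.filter fun v => 1 ≤ ∑ u ∈ closedNbhd (graph h) v, opinion h u := by
    intro v hv
    rw [mem_filter] at hv ⊢
    refine ⟨mem_univ v, ?_⟩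
    rw [sum_closedNbhd_of_happy_subset (isConfig_graph_opinion hh)
      (happy_subset_closedNbhd_graph hh hv.2), Nat.cast_sub (by omega)]
    push_cast
    omega
  have := card_le_card hcore
  rw [Fin.card_filter_val_lt] at this
  unfold IsApproving numProponents
  omega

end ApprovingConstruction

/-- for every `h > 3` there is an approving configuration with
`n = 4h - 3` and `d = 2h - 1`. -/
theorem stmt7 (h : ℕ) (hh : 3 < h) :
    ∃ (G : SimpleGraph (Fin (4 * h - 3))) (f : Fin (4 * h - 3) → ℤ),
      IsConfig (2 * h - 1) h G f ∧ IsApproving G f :=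
  ⟨_, _, ApprovingConstruction.isConfig_graph_opinion hh,
    ApprovingConstruction.isApproving_graph_opinion hh⟩
end

section
/- Let n and d be odd positive integers with d < (n+1)/2. Then hmin(n, d) = ⌈(n+1)(d+1)/(4d)⌉. -/
open Finset
open scoped Classical

/-!
Double counting gives `∑_v ∑_{u ∈ N[v]} f u = d ∑_u f u = d (2h - n)`; a proponent contributes
at least `1` to the left side and an opponent at least `-d`, so `P (d + 1) ≤ 2 d h` for `P`
proponents. An approving configuration has `2 P ≥ n + 1`, whence `4 d h ≥ (n + 1) (d + 1)`.

For the matching construction write `n = 2N + 1`, `d = 2r + 1` and split the vertices into cycles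
of lengths `N + 1` and `N` (both at least `d` as `2d < n + 1`), each carrying the `r`-th power of
the cycle, so that closed neighbourhoods are windows of `d` consecutive vertices. On the longer
cycle the happy vertices follow the mechanical word `⌊(j+1)H/(N+1)⌋ - ⌊jH/(N+1)⌋` with
`H = ⌈(N+1)(r+1)/d⌉`: any `d` consecutive letters telescope to at least `⌊dH/(N+1)⌋ ≥ r + 1`
happy vertices, so all `N + 1 > n/2` vertices of that cycle are proponents.
-/

section LowerBound

variable {n : ℕ} {G : SimpleGraph (Fin n)} {f : Fin n → ℤ}

lemma mem_closedNbhd_comm {u v : Fin n} : u ∈ closedNbhd G v ↔ v ∈ closedNbhd G u := by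
  simp only [closedNbhd, mem_filter, mem_univ, true_and, eq_comm (a := u), G.adj_comm v u]

lemma sum_sum_closedNbhd :
    ∑ v, ∑ u ∈ closedNbhd G v, f u = ∑ u, (closedNbhd G u).card * f u := by
  rw [Finset.sum_comm' (t' := univ) (s' := closedNbhd G)
    (fun v u => by simp [mem_closedNbhd_comm (G := G) (u := u) (v := v)])]
  simp

lemma sum_eq_two_mul_card_sub {ι : Type*} (s : Finset ι) {g : ι → ℤ}
    (hg : ∀ i, g i = 1 ∨ g i = -1) :
    ∑ i ∈ s, g i = 2 * (s.filter (g · = 1)).card - s.card := by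
  have : ∀ i ∈ s, g i = 2 * (if g i = 1 then 1 else 0) - 1 := by
    intro i _; rcases hg i with h | h <;> simp [h]
  rw [Finset.sum_congr rfl this, Finset.sum_sub_distrib, ← Finset.mul_sum, Finset.sum_boole]
  simp

lemma IsConfig.numProponents_mul_le {d h : ℕ} (hc : IsConfig d h G f) :
    numProponents G f * (d + 1) ≤ 2 * d * h := by
  obtain ⟨hreg, hpm, hcard⟩ := hc
  have hsum : ∑ v, ∑ u ∈ closedNbhd G v, f u = d * (2 * h - n) := by
    rw [sum_sum_closedNbhd, Finset.sum_congr rfl fun u _ => by rw [hreg u], ← Finset.mul_sum,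
      sum_eq_two_mul_card_sub _ hpm, hcard, card_univ, Fintype.card_fin]
  have hpt : ∀ v, (if 1 ≤ ∑ u ∈ closedNbhd G v, f u then (d : ℤ) + 1 else 0) - d ≤
      ∑ u ∈ closedNbhd G v, f u := by
    intro v
    have : -(d : ℤ) ≤ ∑ u ∈ closedNbhd G v, f u := by
      have := Finset.card_nsmul_le_sum (closedNbhd G v) f (-1)
        fun u _ => by rcases hpm u with h | h <;> simp [h]
      simpa [hreg v] using this
    split_ifs with h <;> linarith
  have := Finset.sum_le_sum fun v (_ : v ∈ univ) => hpt v
  rw [Finset.sum_sub_distrib, ← Finset.sum_filter, hsum] at this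
  simp only [sum_const, card_univ, Fintype.card_fin, nsmul_eq_mul] at this
  have : ((numProponents G f * (d + 1) : ℕ) : ℤ) ≤ (2 * d * h : ℕ) := by
    push_cast [numProponents]; nlinarith
  exact_mod_cast this

lemma IsConfig.succ_mul_succ_le_of_isApproving {d h : ℕ} (hc : IsConfig d h G f)
    (ha : IsApproving G f) : (n + 1) * (d + 1) ≤ 4 * d * h := by
  have := hc.numProponents_mul_le
  unfold IsApproving at ha
  nlinarith

end LowerBound

section MechanicalWord

variable (H T : ℤ)

def mechanicalWord (j : ℤ) : ℤ := (j + 1) * H / T - j * H / T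

variable {H T}

lemma mechanicalWord_periodic (hT : T ≠ 0) : Function.Periodic (mechanicalWord H T) T := by
  intro j
  have h1 : (j + T + 1) * H = (j + 1) * H + H * T := by ring
  have h2 : (j + T) * H = j * H + H * T := by ring
  rw [mechanicalWord, mechanicalWord, h1, h2, Int.add_mul_ediv_right _ _ hT,
    Int.add_mul_ediv_right _ _ hT]
  ring

lemma mechanicalWord_emod (hT : T ≠ 0) (j : ℤ) :
    mechanicalWord H T (j % T) = mechanicalWord H T j := by
  rw [Int.emod_def, mul_comm]
  exact (mechanicalWord_periodic hT).sub_int_mul_eq _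

lemma mechanicalWord_eq_zero_or_one (hT : 0 < T) (hH : 0 ≤ H) (hHT : H ≤ T) (j : ℤ) :
    mechanicalWord H T j = 0 ∨ mechanicalWord H T j = 1 := by
  have lo : j * H / T ≤ (j + 1) * H / T := Int.ediv_le_ediv hT (by nlinarith)
  have hi : (j + 1) * H / T ≤ j * H / T + 1 := by
    rw [← Int.add_mul_ediv_right _ _ hT.ne']
    exact Int.ediv_le_ediv hT (by nlinarith)
  unfold mechanicalWord
  omega

lemma sum_mechanicalWord (a : ℤ) (k : ℕ) :
    ∑ i ∈ range k, mechanicalWord H T (a + i) = (a + k) * H / T - a * H / T := by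
  have := Finset.sum_range_sub (fun i : ℕ => (a + i) * H / T) k
  simp only [Nat.cast_add, Nat.cast_one, Nat.cast_zero, add_zero, ← add_assoc] at this
  exact this

lemma le_sum_mechanicalWord (hT : 0 < T) {m : ℤ} {k : ℕ} (hk : m * T ≤ k * H) (a : ℤ) :
    m ≤ ∑ i ∈ range k, mechanicalWord H T (a + i) := by
  rw [sum_mechanicalWord]
  have : a * H / T + m ≤ (a + k) * H / T := by
    rw [← Int.add_mul_ediv_right _ _ hT.ne']
    exact Int.ediv_le_ediv hT (by nlinarith)
  omega

end MechanicalWord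

lemma ZMod.sum_val_eq_sum_range {M : Type*} [AddCommMonoid M] (T : ℕ) [NeZero T] (g : ℕ → M) :
    ∑ x : ZMod T, g x.val = ∑ j ∈ range T, g j := by
  obtain ⟨t, rfl⟩ : ∃ t, T = t + 1 := ⟨T - 1, by have := NeZero.pos T; omega⟩
  exact Fin.sum_univ_eq_sum_range g (t + 1)

lemma SimpleGraph.eq_or_circulantGraph_adj_iff {G : Type*} [AddGroup G] {S : Set G}
    (h0 : 0 ∈ S) (hneg : ∀ y ∈ S, -y ∈ S) {x y : G} :
    y = x ∨ (circulantGraph S).Adj x y ↔ y - x ∈ S := by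
  rw [circulantGraph_adj]
  constructor
  · rintro (rfl | ⟨-, h | h⟩)
    · rwa [sub_self]
    · simpa using hneg _ h
    · exact h
  · intro h
    by_cases hxy : y = x
    · exact Or.inl hxy
    · exact Or.inr ⟨Ne.symm hxy, Or.inr h⟩

section CyclePower

variable {T : ℕ} (r : ℕ)

def window (x : ZMod T) : Finset (ZMod T) :=
  (range (2 * r + 1)).image fun i : ℕ => x + ((i - r : ℤ) : ZMod T)

def cyclePowerGraph (T r : ℕ) : SimpleGraph (ZMod T) :=
  SimpleGraph.circulantGraph (window r (0 : ZMod T) : Set (ZMod T))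

variable {r}

lemma mem_window_iff_sub_mem {x y : ZMod T} : y ∈ window r x ↔ y - x ∈ window r 0 := by
  simp only [window, mem_image, zero_add, eq_sub_iff_add_eq']

lemma mem_window_iff_adj {x y : ZMod T} :
    y ∈ window r x ↔ y = x ∨ (cyclePowerGraph T r).Adj x y := by
  rw [cyclePowerGraph, SimpleGraph.eq_or_circulantGraph_adj_iff, mem_window_iff_sub_mem, mem_coe]
  · exact mem_image.mpr ⟨r, mem_range.mpr (by omega), by simp⟩
  · simp only [coe_image, Set.mem_image, coe_range, Set.mem_Iio, window, zero_add]
    rintro _ ⟨i, hi, rfl⟩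
    exact ⟨2 * r - i, by omega, by push_cast [Nat.cast_sub (by omega : i ≤ 2 * r)]; ring⟩

lemma window_injOn (hT : 2 * r + 1 ≤ T) (x : ZMod T) :
    Set.InjOn (fun i : ℕ => x + ((i - r : ℤ) : ZMod T)) (range (2 * r + 1)) := by
  intro i hi j hj hij
  simp only [coe_range, Set.mem_Iio] at hi hj
  have hdvd := (ZMod.intCast_eq_intCast_iff_dvd_sub _ _ _).mp (add_left_cancel hij)
  have := Int.eq_zero_of_abs_lt_dvd hdvd (abs_sub_lt_iff.mpr ⟨by omega, by omega⟩)
  omega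

lemma card_window (hT : 2 * r + 1 ≤ T) (x : ZMod T) : (window r x).card = 2 * r + 1 := by
  rw [window, card_image_of_injOn (window_injOn hT x), card_range]

lemma sum_window {M : Type*} [AddCommMonoid M] (hT : 2 * r + 1 ≤ T) (x : ZMod T)
    (g : ZMod T → M) :
    ∑ y ∈ window r x, g y = ∑ i ∈ range (2 * r + 1), g (x + ((i - r : ℤ) : ZMod T)) :=
  sum_image (window_injOn hT x)

end CyclePower

section Relabel

variable {n : ℕ} {W W₁ W₂ : Type*}

lemma closedNbhd_comap (e : Fin n ≃ W) (G : SimpleGraph W) {v : Fin n} {s : Finset W}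
    (hs : ∀ w, w ∈ s ↔ w = e v ∨ G.Adj (e v) w) :
    closedNbhd (G.comap e) v = s.map e.symm.toEmbedding := by
  ext u
  simp [closedNbhd, hs, Finset.mem_map_equiv]

lemma mem_map_inl_iff {G₁ : SimpleGraph W₁} {G₂ : SimpleGraph W₂} {x : W₁} {s : Finset W₁}
    (hs : ∀ y, y ∈ s ↔ y = x ∨ G₁.Adj x y) (w : W₁ ⊕ W₂) :
    w ∈ s.map .inl ↔ w = .inl x ∨ (G₁ ⊕g G₂).Adj (.inl x) w := by
  cases w <;> simp [hs]

lemma mem_map_inr_iff {G₁ : SimpleGraph W₁} {G₂ : SimpleGraph W₂} {y : W₂} {s : Finset W₂}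
    (hs : ∀ z, z ∈ s ↔ z = y ∨ G₂.Adj y z) (w : W₁ ⊕ W₂) :
    w ∈ s.map .inr ↔ w = .inr y ∨ (G₁ ⊕g G₂).Adj (.inr y) w := by
  cases w <;> simp [hs]

end Relabel

section Construction

variable {T : ℕ} [NeZero T] {H : ℕ}

lemma mechanicalWord_val_add (x : ZMod T) (j : ℤ) :
    mechanicalWord H T ((x + (j : ZMod T)).val : ℤ) = mechanicalWord H T (x.val + j) := by
  have hx : x + (j : ZMod T) = ((x.val + j : ℤ) : ZMod T) := by
    push_cast [ZMod.natCast_zmod_val]; rfl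
  rw [hx, ZMod.val_intCast, mechanicalWord_emod (by exact_mod_cast NeZero.ne T)]

lemma sum_mechanicalWord_val : ∑ x : ZMod T, mechanicalWord H T (x.val : ℤ) = H := by
  rw [ZMod.sum_val_eq_sum_range T (fun j => mechanicalWord H T j)]
  have := sum_mechanicalWord (H := H) (T := T) 0 T
  simp only [zero_add, zero_mul, Int.zero_ediv, sub_zero] at this
  rw [this, Int.mul_ediv_cancel_left _ (by exact_mod_cast NeZero.ne T)]

lemma one_le_sum_window {r : ℕ} (hT : 2 * r + 1 ≤ T) (hH : (r + 1) * T ≤ (2 * r + 1) * H)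
    (x : ZMod T) : 1 ≤ ∑ y ∈ window r x, (2 * mechanicalWord H T (y.val : ℤ) - 1) := by
  rw [sum_window hT, sum_sub_distrib, ← mul_sum]
  simp only [mechanicalWord_val_add, sum_const, card_range, nsmul_eq_mul, mul_one]
  have := le_sum_mechanicalWord (H := H) (T := T) (by exact_mod_cast NeZero.pos T)
    (m := r + 1) (k := 2 * r + 1) (by exact_mod_cast hH) (x.val - r)
  simp only [sub_add_eq_add_sub, ← add_sub_assoc] at this ⊢
  push_cast
  linarith

end Construction

theorem exists_isConfig_le_numProponents {n T R r H : ℕ} (hn : T + R = n) (hT : 2 * r + 1 ≤ T)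
    (hR : 2 * r + 1 ≤ R) (hHT : H ≤ T) (hH : (r + 1) * T ≤ (2 * r + 1) * H) :
    ∃ (G : SimpleGraph (Fin n)) (f : Fin n → ℤ),
      IsConfig (2 * r + 1) H G f ∧ T ≤ numProponents G f := by
  have : NeZero T := ⟨by omega⟩
  have : NeZero R := ⟨by omega⟩
  let e : Fin n ≃ ZMod T ⊕ ZMod R := Fintype.equivOfCardEq (by simp [ZMod.card, hn])
  let F : ZMod T ⊕ ZMod R → ℤ :=
    Sum.elim (fun x => 2 * mechanicalWord H T (x.val : ℤ) - 1) fun _ => -1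
  let G := (cyclePowerGraph T r ⊕g cyclePowerGraph R r).comap e
  have hinl {v : Fin n} {x : ZMod T} (hv : e v = .inl x) :
      closedNbhd G v = ((window r x).map .inl).map e.symm.toEmbedding :=
    closedNbhd_comap e _ (hv ▸ mem_map_inl_iff fun _ => mem_window_iff_adj)
  have hinr {v : Fin n} {y : ZMod R} (hv : e v = .inr y) :
      closedNbhd G v = ((window r y).map .inr).map e.symm.toEmbedding :=
    closedNbhd_comap e _ (hv ▸ mem_map_inr_iff fun _ => mem_window_iff_adj)
  have hpm : ∀ v, (F ∘ e) v = 1 ∨ (F ∘ e) v = -1 := by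
    intro v
    rcases hv : e v with x | y
    · rcases mechanicalWord_eq_zero_or_one (H := H) (T := T) (by omega) (by omega)
        (by exact_mod_cast hHT) x.val with h | h <;>
        simp only [F, Function.comp_apply, hv, Sum.elim_inl, h] <;> norm_num
    · simp only [F, Function.comp_apply, hv, Sum.elim_inr, or_true]
  refine ⟨G, F ∘ e, ⟨fun v => ?_, hpm, ?_⟩, ?_⟩
  · rcases hv : e v with x | y
    · rw [hinl hv, card_map, card_map, card_window hT]
    · rw [hinr hv, card_map, card_map, card_window hR]
  · have htotal : ∑ v, (F ∘ e) v = 2 * H - n := by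
      rw [Function.comp_def, e.sum_comp F, Fintype.sum_sum_type]
      simp only [F, Sum.elim_inl, Sum.elim_inr, sum_sub_distrib, ← mul_sum,
        sum_mechanicalWord_val, sum_const, card_univ, ZMod.card, nsmul_eq_mul]
      push_cast [← hn]
      ring
    rw [sum_eq_two_mul_card_sub univ hpm, card_univ, Fintype.card_fin] at htotal
    omega
  · have hsub : univ.map (Function.Embedding.inl.trans e.symm.toEmbedding) ⊆
        univ.filter fun v => 1 ≤ ∑ u ∈ closedNbhd G v, (F ∘ e) u := by
      intro v hv
      obtain ⟨x, -, rfl⟩ := mem_map.mp hv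
      rw [mem_filter, hinl (x := x) (by simp)]
      simpa [F] using one_le_sum_window hT hH x
    simpa [numProponents] using card_le_card hsub

theorem stmt11_general (n d : ℕ) (hn : Odd n) (hd : Odd d) (hlow : 2 * d < n + 1) :
    (hmin n d : ℤ) = ⌈(((n : ℚ) + 1) * ((d : ℚ) + 1)) / (4 * (d : ℚ))⌉ := by
  obtain ⟨N, rfl⟩ := hn
  obtain ⟨r, rfl⟩ := hd
  set q : ℚ :=
    (((2 * N + 1 : ℕ) : ℚ) + 1) * (((2 * r + 1 : ℕ) : ℚ) + 1) / (4 * ((2 * r + 1 : ℕ) : ℚ))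
  have hq (h : ℕ) : q ≤ h ↔ (N + 1) * (r + 1) ≤ (2 * r + 1) * h := by
    rw [div_le_iff₀ (by positivity), ← Nat.cast_le (α := ℚ)]
    push_cast
    constructor <;> intro <;> linarith
  have hleast : IsLeast {h | ∃ (G : SimpleGraph (Fin (2 * N + 1))) (f : Fin (2 * N + 1) → ℤ),
      IsConfig (2 * r + 1) h G f ∧ IsApproving G f} ⌈q⌉₊ := by
    refine ⟨?_, fun h ⟨G, f, hc, ha⟩ => Nat.ceil_le.mpr ((hq h).mpr ?_)⟩
    · have hH := (hq _).mp (Nat.le_ceil q)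
      have hHT : ⌈q⌉₊ ≤ N + 1 := Nat.ceil_le.mpr ((hq _).mpr (by nlinarith))
      obtain ⟨G, f, hc, hP⟩ := exists_isConfig_le_numProponents (n := 2 * N + 1) (T := N + 1)
        (R := N) (r := r) (by omega) (by omega) (by omega) hHT (by linarith)
      exact ⟨G, f, hc, by unfold IsApproving; omega⟩
    · have := hc.succ_mul_succ_le_of_isApproving ha
      nlinarith
  rw [hmin, hleast.csInf_eq, Int.natCast_ceil_eq_ceil (by positivity)]

/-- for low-degree classes, `hmin(n,d) = ⌈(n+1)(d+1)/(4d)⌉`. -/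
theorem stmt11 (n d : ℕ) (hn : Odd n) (hd : Odd d) (hnpos : 0 < n) (hdpos : 0 < d)
    (hlow : 2 * d < n + 1) :
    (hmin n d : ℤ) = ⌈(((n : ℚ) + 1) * ((d : ℚ) + 1)) / (4 * (d : ℚ))⌉ :=
  stmt11_general n d hn hd hlow
end
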